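/- Let C = ((A,0),(B,D)) be column-stochastic with A and D irreducible and B ≠ 0 nonnegative. Then there exists a nonnegative vector x = (0, z) with z having all positive components and max component 1 such that Cx = x, and this x is the unique such normalized nonnegative fixed point of C. -/
import Mathlib

/-- Irreducibility of a nonnegative square matrix. -/
def MatIrreducible {n : Type*} [Fintype n] [DecidableEq n]
    (C : Matrix n n ℝ) : Prop :=
  ∀ i j, ∃ k > 0, 0 < (C ^ k) i j

open Matrix

lemma pow_entry_nonneg {n : Type*} [Fintype n] [DecidableEq n] {M : Matrix n n ℝ}
    (h : ∀ i j, 0 ≤ M i j) : ∀ p (i j : n), 0 ≤ (M ^ p) i j := by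
  intro p
  induction p with
  | zero =>
    intro i j
    simp only [pow_zero, Matrix.one_apply]
    split <;> norm_num
  | succ p ih =>
    intro i j
    rw [pow_succ, Matrix.mul_apply]
    exact Finset.sum_nonneg fun l _ => mul_nonneg (ih i l) (h l j)

lemma pow_mulVec_fixed {n : Type*} [Fintype n] [DecidableEq n] {M : Matrix n n ℝ}
    {u : n → ℝ} (h : M.mulVec u = u) : ∀ p, (M ^ p).mulVec u = u := by
  intro p
  induction p with
  | zero => simp [Matrix.one_mulVec]
  | succ p ih => rw [pow_succ, ← Matrix.mulVec_mulVec, h, ih]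

lemma fixed_pos {n : Type*} [Fintype n] [DecidableEq n] {M : Matrix n n ℝ}
    (hM : ∀ i j, 0 ≤ M i j) (hirr : MatIrreducible M) {u : n → ℝ}
    (hu : ∀ i, 0 ≤ u i) (hf : M.mulVec u = u) (hne : ∃ j, 0 < u j) :
    ∀ i, 0 < u i := by
  obtain ⟨j, hj⟩ := hne
  intro i
  obtain ⟨p, _, hpij⟩ := hirr i j
  have h1 : u i = ∑ l, (M ^ p) i l * u l := by
    conv_lhs => rw [← pow_mulVec_fixed hf p]
    rfl
  rw [h1]
  have h2 : (M ^ p) i j * u j ≤ ∑ l, (M ^ p) i l * u l :=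
    Finset.single_le_sum (fun l _ => mul_nonneg (pow_entry_nonneg hM p i l) (hu l))
      (Finset.mem_univ j)
  exact lt_of_lt_of_le (mul_pos hpij hj) h2

/-- For a block lower-triangular column-stochastic matrix ((A,0),(B,D)) with
A, D irreducible and B ≠ 0, there is a unique normalized nonnegative fixed
vector, and it has the form (0, z) with z strictly positive. -/
theorem block_column_stochastic_unique_normalized_fixed_vector (m k : ℕ)
    (A : Matrix (Fin m) (Fin m) ℝ) (B : Matrix (Fin k) (Fin m) ℝ)
    (D : Matrix (Fin k) (Fin k) ℝ)
    (C : Matrix (Fin m ⊕ Fin k) (Fin m ⊕ Fin k) ℝ)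
    (hC : C = Matrix.fromBlocks A 0 B D)
    (hnonneg : ∀ i j, 0 ≤ C i j)
    (hcol : ∀ j, ∑ i, C i j = 1)
    (hA : MatIrreducible A) (hD : MatIrreducible D) (hB : B ≠ 0) :
    ∃ x : Fin m ⊕ Fin k → ℝ,
      (∀ i, x (Sum.inl i) = 0) ∧ (∀ i, 0 < x (Sum.inr i)) ∧
      (∀ i, x i ≤ 1) ∧ (∃ i, x i = 1) ∧ C.mulVec x = x ∧
      ∀ x' : Fin m ⊕ Fin k → ℝ, (∀ i, 0 ≤ x' i) → C.mulVec x' = x' →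
        (∀ i, x' i ≤ 1) → (∃ i, x' i = 1) → x' = x := by
  subst hC
  -- entrywise nonnegativity of blocks
  have hAnn : ∀ i j, 0 ≤ A i j := fun i j => by
    simpa using hnonneg (Sum.inl i) (Sum.inl j)
  have hBnn : ∀ i j, 0 ≤ B i j := fun i j => by
    simpa using hnonneg (Sum.inr i) (Sum.inl j)
  have hDnn : ∀ i j, 0 ≤ D i j := fun i j => by
    simpa using hnonneg (Sum.inr i) (Sum.inr j)
  -- column sums
  have hDcol : ∀ j, ∑ i, D i j = 1 := by
    intro j
    have := hcol (Sum.inr j)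
    simpa [Fintype.sum_sum_type] using this
  have hABcol : ∀ j, (∑ i, A i j) + (∑ i, B i j) = 1 := by
    intro j
    have := hcol (Sum.inl j)
    simpa [Fintype.sum_sum_type] using this
  -- k is nonzero
  have hk : Nonempty (Fin k) := by
    rcases Nat.eq_zero_or_pos k with h0 | h0
    · exfalso; apply hB; subst h0; funext i j; exact i.elim0
    · exact ⟨⟨0, h0⟩⟩
  -- existence of eigenvector of D
  have hdet : (D - 1).det = 0 := by
    rw [← Matrix.det_transpose, Matrix.transpose_sub, Matrix.transpose_one]
    rw [← Matrix.exists_mulVec_eq_zero_iff]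
    refine ⟨fun _ => 1, ?_, ?_⟩
    · intro h
      obtain ⟨i⟩ := hk
      have := congrFun h i
      norm_num at this
    · funext i
      simp [Matrix.sub_mulVec, Matrix.mulVec, dotProduct, Matrix.transpose_apply,
        Matrix.one_apply, hDcol i]
  obtain ⟨v, hv0, hv⟩ := Matrix.exists_mulVec_eq_zero_iff.2 hdet
  have hDv : D.mulVec v = v := by
    have := hv
    rw [Matrix.sub_mulVec, Matrix.one_mulVec, sub_eq_zero] at this
    exact this
  set va : Fin k → ℝ := fun i => |v i| with hva
  have hvale : ∀ i, va i ≤ (D.mulVec va) i := by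
    intro i
    have : va i = |(D.mulVec v) i| := by rw [hDv]
    rw [this]
    calc |(D.mulVec v) i| = |∑ j, D i j * v j| := rfl
      _ ≤ ∑ j, |D i j * v j| := Finset.abs_sum_le_sum_abs _ _
      _ = ∑ j, D i j * va j := by
          refine Finset.sum_congr rfl fun j _ => ?_
          rw [abs_mul, abs_of_nonneg (hDnn i j)]
      _ = (D.mulVec va) i := rfl
  have hsumva : ∑ i, va i = ∑ i, (D.mulVec va) i := by
    have : ∑ i, (D.mulVec va) i = ∑ j, va j := by
      calc ∑ i, (D.mulVec va) i = ∑ i, ∑ j, D i j * va j := rfl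
        _ = ∑ j, ∑ i, D i j * va j := Finset.sum_comm
        _ = ∑ j, (∑ i, D i j) * va j := by
            refine Finset.sum_congr rfl fun j _ => ?_
            rw [Finset.sum_mul]
        _ = ∑ j, va j := by
            refine Finset.sum_congr rfl fun j _ => ?_
            rw [hDcol j, one_mul]
    rw [this]
  have hDva : D.mulVec va = va := by
    funext i
    exact ((Finset.sum_eq_sum_iff_of_le (fun i _ => hvale i)).1 hsumva i
      (Finset.mem_univ i)).symm
  have hvann : ∀ i, 0 ≤ va i := fun i => abs_nonneg _
  have hvane : ∃ j, 0 < va j := by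
    by_contra h
    push_neg at h
    apply hv0
    funext i
    have := h i
    have : va i = 0 := le_antisymm this (hvann i)
    simpa [hva, abs_eq_zero] using this
  have hvapos : ∀ i, 0 < va i := fixed_pos hDnn hD hvann hDva hvane
  -- normalize
  obtain ⟨i0, _, hi0max⟩ := Finset.exists_max_image Finset.univ va Finset.univ_nonempty
  set z : Fin k → ℝ := fun i => va i / va i0 with hz
  have hzpos : ∀ i, 0 < z i := fun i => div_pos (hvapos i) (hvapos i0)
  have hzle : ∀ i, z i ≤ 1 := fun i =>
    div_le_one_of_le₀ (hi0max i (Finset.mem_univ i)) (le_of_lt (hvapos i0))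
  have hzi0 : z i0 = 1 := div_self (ne_of_gt (hvapos i0))
  have hDz : D.mulVec z = z := by
    have : z = (va i0)⁻¹ • va := by
      funext i; simp [hz, div_eq_inv_mul, smul_eq_mul]
    rw [this, Matrix.mulVec_smul, hDva]
  -- the candidate vector
  refine ⟨Sum.elim (fun _ => 0) z, fun i => rfl, fun i => hzpos i, ?_, ?_, ?_, ?_⟩
  · intro i; cases i with
    | inl i => simp
    | inr i => exact hzle i
  · exact ⟨Sum.inr i0, hzi0⟩
  · funext i
    cases i with
    | inl i =>
      simp [Matrix.mulVec, dotProduct, Fintype.sum_sum_type]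
    | inr i =>
      have : (D.mulVec z) i = z i := congrFun hDz i
      simpa [Matrix.mulVec, dotProduct, Fintype.sum_sum_type] using this
  -- uniqueness
  · intro x' hx'nn hx'fix hx'le hx'max
    set y : Fin m → ℝ := fun i => x' (Sum.inl i) with hy
    set w : Fin k → ℝ := fun i => x' (Sum.inr i) with hw
    have hAy : A.mulVec y = y := by
      funext i
      have := congrFun hx'fix (Sum.inl i)
      simpa [Matrix.mulVec, dotProduct, Fintype.sum_sum_type] using this
    -- a deficient column of A
    obtain ⟨ib, jb, hbij⟩ : ∃ i j, 0 < B i j := by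
      by_contra h
      push_neg at h
      exact hB (by funext i j; exact le_antisymm (h i j) (hBnn i j))
    have hAcolle : ∀ j, ∑ i, A i j ≤ 1 := by
      intro j
      have := hABcol j
      nlinarith [Finset.sum_nonneg (fun i (_ : i ∈ Finset.univ) => hBnn i j)]
    have hAcoljb : ∑ i, A i jb < 1 := by
      have hB1 : B ib jb ≤ ∑ i, B i jb :=
        Finset.single_le_sum (fun i _ => hBnn i jb) (Finset.mem_univ ib)
      nlinarith [hABcol jb]
    have hynn : ∀ i, 0 ≤ y i := fun i => hx'nn (Sum.inl i)
    -- sum argument: y jb = 0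
    have hsZero : ∑ j, (1 - ∑ i, A i j) * y j = 0 := by
      have h1 : ∑ i, (A.mulVec y) i = ∑ i, y i := by rw [hAy]
      have h2 : ∑ i, (A.mulVec y) i = ∑ j, (∑ i, A i j) * y j := by
        calc ∑ i, (A.mulVec y) i = ∑ i, ∑ j, A i j * y j := rfl
          _ = ∑ j, ∑ i, A i j * y j := Finset.sum_comm
          _ = ∑ j, (∑ i, A i j) * y j := by
              refine Finset.sum_congr rfl fun j _ => ?_
              rw [Finset.sum_mul]
      have : ∑ j, (1 - ∑ i, A i j) * y j
          = ∑ j, y j - ∑ j, (∑ i, A i j) * y j := by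
        rw [← Finset.sum_sub_distrib]
        refine Finset.sum_congr rfl fun j _ => by ring
      rw [this, ← h2, h1, sub_self]
    have hyjb : y jb = 0 := by
      have hterm : (1 - ∑ i, A i jb) * y jb = 0 :=
        (Finset.sum_eq_zero_iff_of_nonneg (fun j _ =>
          mul_nonneg (by linarith [hAcolle j]) (hynn j))).1 hsZero jb (Finset.mem_univ jb)
      rcases mul_eq_zero.1 hterm with h | h
      · linarith
      · exact h
    have hy0 : ∀ i, y i = 0 := by
      by_contra h
      push_neg at h
      obtain ⟨i, hi⟩ := h
      have : 0 < y i := lt_of_le_of_ne (hynn i) (Ne.symm hi)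
      have := fixed_pos hAnn hA hynn hAy ⟨i, this⟩ jb
      linarith [hyjb]
    have hDw : D.mulVec w = w := by
      funext i
      have h1 := congrFun hx'fix (Sum.inr i)
      have h2 : ∑ j, B i j * y j = 0 :=
        Finset.sum_eq_zero fun j _ => by rw [hy0 j, mul_zero]
      simp only [Matrix.mulVec, dotProduct, Fintype.sum_sum_type,
        Matrix.fromBlocks_apply₂₁, Matrix.fromBlocks_apply₂₂] at h1
      rw [h2] at h1
      simpa [Matrix.mulVec, dotProduct] using h1
    have hwnn : ∀ i, 0 ≤ w i := fun i => hx'nn (Sum.inr i)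
    have hwle : ∀ i, w i ≤ 1 := fun i => hx'le (Sum.inr i)
    have hwone : ∃ i, w i = 1 := by
      obtain ⟨i, hi⟩ := hx'max
      cases i with
      | inl i =>
        exfalso
        have h0 : x' (Sum.inl i) = 0 := hy0 i
        rw [h0] at hi; norm_num at hi
      | inr i => exact ⟨i, hi⟩
    have hwpos : ∀ i, 0 < w i := by
      obtain ⟨i1, hi1⟩ := hwone
      exact fixed_pos hDnn hD hwnn hDw ⟨i1, by rw [hi1]; norm_num⟩
    -- min-ratio argument
    obtain ⟨i1, _, hi1min⟩ := Finset.exists_min_image Finset.univ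
      (fun i => w i / z i) Finset.univ_nonempty
    set t : ℝ := w i1 / z i1 with ht
    have htpos : 0 < t := div_pos (hwpos i1) (hzpos i1)
    set u : Fin k → ℝ := fun i => w i - t * z i with hu
    have hunn : ∀ i, 0 ≤ u i := by
      intro i
      have := hi1min i (Finset.mem_univ i)
      have h2 : t * z i ≤ w i := by
        rw [ht]
        rw [div_le_div_iff₀ (hzpos i1) (hzpos i)] at this
        calc w i1 / z i1 * z i = w i1 * z i / z i1 := by ring
          _ ≤ w i * z i1 / z i1 := by
              gcongr
          _ = w i := by
              rw [mul_div_assoc, div_self (ne_of_gt (hzpos i1)), mul_one]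
      show 0 ≤ w i - t * z i
      linarith
    have hui1 : u i1 = 0 := by
      show w i1 - t * z i1 = 0
      rw [ht, div_mul_cancel₀ _ (ne_of_gt (hzpos i1)), sub_self]
    have hDu : D.mulVec u = u := by
      have : u = w - t • z := by funext i; simp [hu, smul_eq_mul]
      rw [this, Matrix.mulVec_sub, Matrix.mulVec_smul, hDw, hDz]
    have hu0 : ∀ i, u i = 0 := by
      by_contra h
      push_neg at h
      obtain ⟨i, hi⟩ := h
      have hipos : 0 < u i := lt_of_le_of_ne (hunn i) (Ne.symm hi)
      have := fixed_pos hDnn hD hunn hDu ⟨i, hipos⟩ i1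
      linarith [hui1]
    have hwt : ∀ i, w i = t * z i := by
      intro i
      have := hu0 i
      simp only [hu] at this
      linarith
    -- t = 1
    have ht1 : t = 1 := by
      obtain ⟨iw, hiw⟩ := hwone
      have h1 : t * z iw = 1 := by rw [← hwt iw, hiw]
      have h2 : w i0 = t := by rw [hwt i0, hzi0, mul_one]
      have h3 : t ≤ 1 := by rw [← h2]; exact hwle i0
      have h4 : 1 ≤ t := by
        nlinarith [hzle iw, hzpos iw]
      linarith
    funext i
    cases i with
    | inl i => exact hy0 i
    | inr i =>
      have := hwt i
      rw [ht1, one_mul] at this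
      exact this
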